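/- arXiv:2409.07953 — 2 statements merged into one kernel-verified Lean document; each statement's English description precedes it below -/
import Mathlib

section
/- Let A¹ : Matrix (Fin I₁) (Fin R) ℝ and A³ : Matrix (Fin I₃) (Fin R) ℝ, and let A² : Fin I₂ → Fin R → Fin R → ℝ be a 3-dimensional tensor admitting the rank-S CP decomposition A² i r r' = ∑_{s : Fin S} V i s * B r s * C r' s for matrices V : Matrix (Fin I₂) (Fin S) ℝ and B, C : Matrix (Fin R) (Fin S) ℝ. Then for all (x₁, x₂, x₃), the matrix-product state value ∑_{r₁ : Fin R} ∑_{r₂ : Fin R} A¹ x₁ r₁ * A² x₂ r₁ r₂ * A³ x₃ r₂ equals ∑_{s : Fin S} ((Bᵀ).mulVec (A¹ x₁ ·)) s * V x₂ s * ((Cᵀ).mulVec (A³ x₃ ·)) s, i.e., the sum of the entrywise (Hadamard) product of the three S-dimensional vectors Bᵀ(A¹ row x₁), (V row x₂), and Cᵀ(A³ row x₃). (This is the deep tensorized circuit with Hadamard product layers computing the same MPS factorization.) -/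
open Matrix


private lemma sum_rot {α β γ : Type*} [Fintype α] [Fintype β] [Fintype γ]
    (f : α → β → γ → ℝ) :
    ∑ a : α, ∑ b : β, ∑ c : γ, f a b c = ∑ c : γ, ∑ b : β, ∑ a : α, f a b c :=
  calc ∑ a : α, ∑ b : β, ∑ c : γ, f a b c
      = ∑ b : β, ∑ a : α, ∑ c : γ, f a b c := Finset.sum_comm
    _ = ∑ b : β, ∑ c : γ, ∑ a : α, f a b c :=
        Finset.sum_congr rfl fun b _ => Finset.sum_comm
    _ = ∑ c : γ, ∑ b : β, ∑ a : α, f a b c := Finset.sum_comm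

/-- An MPS whose interior tensor admits a CP decomposition is computed by a deep
tensorized circuit with Hadamard product layers. -/
theorem mps_as_hadamard_circuit
    (I₁ I₂ I₃ R S : ℕ)
    (A1 : Matrix (Fin I₁) (Fin R) ℝ)
    (A3 : Matrix (Fin I₃) (Fin R) ℝ)
    (A2 : Fin I₂ → Fin R → Fin R → ℝ)
    (V : Matrix (Fin I₂) (Fin S) ℝ)
    (B C : Matrix (Fin R) (Fin S) ℝ)
    (hA2 : ∀ i r r', A2 i r r' = ∑ s : Fin S, V i s * B r s * C r' s)
    (x₁ : Fin I₁) (x₂ : Fin I₂) (x₃ : Fin I₃) :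
    (∑ r₁ : Fin R, ∑ r₂ : Fin R, A1 x₁ r₁ * A2 x₂ r₁ r₂ * A3 x₃ r₂)
      = ∑ s : Fin S,
          ((Bᵀ).mulVec (fun r => A1 x₁ r)) s * V x₂ s * ((Cᵀ).mulVec (fun r => A3 x₃ r)) s := by
  simp only [hA2, mulVec, dotProduct, transpose_apply, Finset.sum_mul, Finset.mul_sum]
  rw [sum_rot (fun r₁ r₂ s => A1 x₁ r₁ * (V x₂ s * B r₁ s * C r₂ s) * A3 x₃ r₂)]
  refine Finset.sum_congr rfl fun s _ => ?_
  exact Finset.sum_congr rfl fun r₁ _ => Finset.sum_congr rfl fun r₂ _ => by ring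
end

section
/- Let d ≥ 1, dimensions I : Fin d → ℕ, and let p and q be two Tucker-factorized functions over the same joint domain: p(x) = ∑_{r : Π j, Fin (R j)} W r * ∏_j V_j (x j) (r j) with ranks R, core W, and factor matrices V_j : Matrix (Fin (I j)) (Fin (R j)) ℝ; and q(x) = ∑_{r' : Π j, Fin (R' j)} W' r' * ∏_j V'_j (x j) (r' j) with ranks R', core W', and factor matrices V'_j : Matrix (Fin (I j)) (Fin (R' j)) ℝ. Then the sum of the product over all joint assignments satisfies ∑_{x : Π j, Fin (I j)} p(x) * q(x) = ∑_{r : Π j, Fin (R j)} ∑_{r' : Π j, Fin (R' j)} W r * W' r' * ∏_j (∑_{i : Fin (I j)} V_j i (r j) * V'_j i (r' j)), i.e., it equals the contraction of the two core tensors against the Gram-type matrices (V_jᵀ V'_j). Hence expectations ∑_x p(x) q(x) of two compatible factorizations are computed exactly without materializing either exponentially large tensor. -/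
/-- The expectation ∑ₓ p(x) q(x) of two Tucker-factorized functions over the same joint
domain equals the contraction of the two core tensors against the Gram-type matrices
formed by the factor matrices. -/
theorem tucker_product_expectation
    (d : ℕ) (hd : 1 ≤ d)
    (I R R' : Fin d → ℕ)
    (W : (∀ j, Fin (R j)) → ℝ)
    (W' : (∀ j, Fin (R' j)) → ℝ)
    (V : ∀ j : Fin d, Matrix (Fin (I j)) (Fin (R j)) ℝ)
    (V' : ∀ j : Fin d, Matrix (Fin (I j)) (Fin (R' j)) ℝ) :
    (∑ x : (∀ j, Fin (I j)),
        (∑ r : (∀ j, Fin (R j)), W r * ∏ j : Fin d, V j (x j) (r j))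
          * (∑ r' : (∀ j, Fin (R' j)), W' r' * ∏ j : Fin d, V' j (x j) (r' j)))
      = ∑ r : (∀ j, Fin (R j)), ∑ r' : (∀ j, Fin (R' j)),
          W r * W' r' * ∏ j : Fin d,
            (∑ i : Fin (I j), V j i (r j) * V' j i (r' j)) := by
  have key : ∀ (r : ∀ j, Fin (R j)) (r' : ∀ j, Fin (R' j)),
      (∏ j : Fin d, ∑ i : Fin (I j), V j i (r j) * V' j i (r' j))
        = ∑ x : (∀ j, Fin (I j)), ∏ j : Fin d, V j (x j) (r j) * V' j (x j) (r' j) := by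
    intro r r'
    exact Fintype.prod_sum (R := ℝ) (κ := fun j => Fin (I j)) fun j i => V j i (r j) * V' j i (r' j)
  simp only [key, Finset.mul_sum, Finset.sum_mul]
  rw [Finset.sum_comm]
  conv_lhs => enter [2, r']; rw [Finset.sum_comm]
  rw [Finset.sum_comm]
  refine Finset.sum_congr rfl fun r _ => Finset.sum_congr rfl fun r' _ =>
    Finset.sum_congr rfl fun x _ => ?_
  rw [Finset.prod_mul_distrib]
  ring
end
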